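/- arXiv:1103.4729 — 2 statements merged into one kernel-verified Lean document; each statement's English description precedes it below -/
import Mathlib

section
/- Suppose a finite group G has three subgroups A₁, A₂, A₃ whose indices are pairwise coprime, such that for all i ≠ j, A_i ∩ A_j is contained in Z_n(F_i) ∩ Z_n(F_j), where F_i is the intersection of all maximal nilpotent subgroups of A_i (a nilpotent characteristic subgroup) and Z_n denotes the n-th term of the upper central series. Then G is nilpotent of nilpotency class at most n. -/
/-! For a prime `p`, coprimality of the indices leaves two of the subgroups, say `A` and `B`,
of index prime to `p`. Then `|G : A ⊓ B| = |G : A| |G : B|` is prime to `p`, so a Sylow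
`p`-subgroup `P` of `A ⊓ B` is one of `G`. Now `P` lies in the nilpotent group `Z_n(F_A)`, hence is
its unique Sylow `p`-subgroup; since `Z_n(F_A)` is characteristic in `A` (automorphisms permute
maximal nilpotent subgroups), `A` normalizes `P`, and so does `B`. The index of the normalizer of
`P` divides two coprime numbers, so `P` is normal in `G`, and its class is at most `n` because that
of `Z_n(F_A)` is. Hence `G` is the direct product of its Sylow subgroups, all of class `≤ n`. -/

/-- `U` is a maximal nilpotent subgroup of its ambient group. -/
def IsMaxNilpotentSubgroup {H : Type*} [Group H] (U : Subgroup H) : Prop :=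
  Group.IsNilpotent U ∧ ∀ V : Subgroup H, Group.IsNilpotent V → U ≤ V → U = V

/-- The intersection of all maximal nilpotent subgroups of a group. -/
def intNilp (H : Type*) [Group H] : Subgroup H :=
  sInf {U : Subgroup H | IsMaxNilpotentSubgroup U}

/-- `Z_n(Int_N(A))` viewed as a subgroup of the ambient group `G`:
the `n`-th term of the upper central series of the intersection of all
maximal nilpotent subgroups of `A`. -/
def znIntNilp {G : Type*} [Group G] (A : Subgroup G) (n : ℕ) : Subgroup G :=
  Subgroup.map A.subtype
    (Subgroup.map (intNilp A).subtype (upperCentralSeries (intNilp A) n))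

namespace Subgroup

variable {G : Type*} [Group G]

theorem index_inf_eq_mul_of_coprime {H K : Subgroup G} (h : Nat.Coprime H.index K.index) :
    (H ⊓ K).index = H.index * K.index := by
  refine le_antisymm index_inf_le ?_
  rcases Nat.eq_zero_or_pos (H.index * K.index) with h0 | hpos
  · simp [h0]
  have hne : (H ⊓ K).index ≠ 0 :=
    index_inf_ne_zero (left_ne_zero_of_mul hpos.ne') (right_ne_zero_of_mul hpos.ne')
  exact Nat.le_of_dvd (Nat.pos_of_ne_zero hne) <|
    h.mul_dvd_of_dvd_of_dvd (index_dvd_of_le inf_le_left) (index_dvd_of_le inf_le_right)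

theorem eq_top_of_le_of_coprime_index {H A B : Subgroup G} (hA : A ≤ H) (hB : B ≤ H)
    (h : Nat.Coprime A.index B.index) : H = ⊤ :=
  index_eq_one.mp <| Nat.eq_one_of_dvd_coprimes h (index_dvd_of_le hA) (index_dvd_of_le hB)

theorem le_normalizer_map_subtype {A : Subgroup G} (N : Subgroup A) [N.Normal] :
    A ≤ normalizer (N.map A.subtype) := by
  have : ((N.map A.subtype).subgroupOf A).Normal := by
    rwa [← comap_subtype, comap_map_eq_self_of_injective A.subtype_injective]
  exact le_normalizer_of_normal_subgroupOf (map_subtype_le N)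

theorem comap_upperCentralSeries_le_of_injective {H : Type*} [Group H] {f : H →* G}
    (hf : Function.Injective f) (k : ℕ) :
    (upperCentralSeries G k).comap f ≤ upperCentralSeries H k := by
  induction k with
  | zero => simpa [upperCentralSeries_zero, ← MonoidHom.ker_eq_bot_iff] using hf
  | succ k ih =>
    intro x hx
    rw [mem_comap, mem_upperCentralSeries_succ_iff] at hx
    refine mem_upperCentralSeries_succ_iff.mpr fun y => ih ?_
    rw [mem_comap, map_commutatorElement]
    exact hx (f y)

theorem upperCentralSeries_eq_top_of_le {S W : Subgroup G} (hSW : S ≤ W) {n : ℕ}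
    (hW : upperCentralSeries W n = ⊤) : upperCentralSeries S n = ⊤ :=
  top_unique <| by
    simpa [hW] using comap_upperCentralSeries_le_of_injective (inclusion_injective hSW) n

theorem upperCentralSeries_upperCentralSeries_eq_top (n : ℕ) :
    upperCentralSeries (upperCentralSeries G n) n = ⊤ :=
  top_unique <| by
    simpa using
      comap_upperCentralSeries_le_of_injective (upperCentralSeries G n).subtype_injective n

theorem upperCentralSeries_map_eq_top {H : Type*} [Group H] {K : Subgroup H} (f : H →* G) {n : ℕ}
    (hK : upperCentralSeries K n = ⊤) : upperCentralSeries (K.map f) n = ⊤ := by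
  have hf := f.subgroupMap_surjective K
  rw [eq_top_iff, ← map_top_of_surjective _ hf, ← hK]
  exact upperCentralSeries.map hf n

theorem upperCentralSeries_pi_eq_top {η : Type*} {Gs : η → Type*} [∀ i, Group (Gs i)] {n : ℕ}
    (h : ∀ i, upperCentralSeries (Gs i) n = ⊤) : upperCentralSeries (∀ i, Gs i) n = ⊤ := by
  simp_rw [← lowerCentralSeries_eq_bot_iff_upperCentralSeries_eq_top] at h ⊢
  rw [eq_bot_iff, ← (pi_eq_bot_iff _).mpr h]
  exact top_lowerCentralSeries_pi_le n

theorem upperCentralSeries_eq_top_of_sylow [Finite G] {n : ℕ}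
    (h : ∀ (p : ℕ) [Fact p.Prime] (P : Sylow p G), P.Normal ∧ upperCentralSeries P n = ⊤) :
    upperCentralSeries G n = ⊤ := by
  have hpi : upperCentralSeries (∀ p : (Nat.card G).primeFactors, ∀ P : Sylow p G, P) n = ⊤ :=
    upperCentralSeries_pi_eq_top fun p => upperCentralSeries_pi_eq_top fun P =>
      have : Fact (p : ℕ).Prime := ⟨Nat.prime_of_mem_primeFactors p.2⟩
      (h p P).2
  rw [← comap_upperCentralSeries (Sylow.directProductOfNormal fun {p} _ P => (h p P).1).symm, hpi,
    comap_top]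

end Subgroup

theorem IsMaxNilpotentSubgroup.map_equiv {H K : Type*} [Group H] [Group K] {U : Subgroup H}
    (hU : IsMaxNilpotentSubgroup U) (e : H ≃* K) :
    IsMaxNilpotentSubgroup (U.map e.toMonoidHom) := by
  obtain ⟨hnil, hmax⟩ := hU
  refine ⟨(Group.isNilpotent_congr (e.subgroupMap U)).mp hnil, fun V hV hUV => ?_⟩
  have hV' : Group.IsNilpotent (V.comap e.toMonoidHom) := by
    rw [Subgroup.comap_equiv_eq_map_symm']
    exact (Group.isNilpotent_congr (e.symm.subgroupMap V)).mp hV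
  rw [hmax _ hV' (Subgroup.map_le_iff_le_comap.mp hUV),
    Subgroup.map_comap_eq_self_of_surjective e.surjective]

instance intNilp_characteristic (H : Type*) [Group H] : (intNilp H).Characteristic := by
  refine Subgroup.characteristic_iff_map_le.mpr fun ϕ => ?_
  rintro _ ⟨x, hx, rfl⟩
  rw [SetLike.mem_coe, intNilp, Subgroup.mem_sInf] at hx
  rw [intNilp, Subgroup.mem_sInf]
  intro U hU
  have := hx _ (hU.map_equiv ϕ.symm)
  rwa [← Subgroup.comap_equiv_eq_map_symm'] at this

section znIntNilp

variable {G : Type*} [Group G]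

theorem le_normalizer_znIntNilp (A : Subgroup G) (n : ℕ) :
    A ≤ Subgroup.normalizer (znIntNilp A n) :=
  Subgroup.le_normalizer_map_subtype ((Subgroup.upperCentralSeries (intNilp A) n).map _)

theorem upperCentralSeries_znIntNilp (A : Subgroup G) (n : ℕ) :
    Subgroup.upperCentralSeries (znIntNilp A n) n = ⊤ :=
  Subgroup.upperCentralSeries_map_eq_top _ <| Subgroup.upperCentralSeries_map_eq_top _ <|
    Subgroup.upperCentralSeries_upperCentralSeries_eq_top n

end znIntNilp

namespace Sylow

variable {G : Type*} [Group G] [Finite G] {p : ℕ} [Fact p.Prime]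

theorem exists_le_of_not_dvd_index {K : Subgroup G} (hK : ¬ p ∣ K.index) :
    ∃ P : Sylow p G, (P : Subgroup G) ≤ K := by
  let Q : Sylow p K := default
  have hQ : ¬ p ∣ (Q.map K.subtype).index := by
    rw [Subgroup.index_map_subtype]
    exact Nat.Prime.not_dvd_mul Fact.out Q.not_dvd_index hK
  exact ⟨(Q.isPGroup'.map K.subtype).toSylow hQ, Subgroup.map_subtype_le _⟩

theorem normalizer_le_normalizer_of_le_isNilpotent (P : Sylow p G) {W : Subgroup G}
    [Group.IsNilpotent W] (hPW : (P : Subgroup G) ≤ W) :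
    Subgroup.normalizer (W : Set G) ≤ Subgroup.normalizer (P : Set G) := by
  intro g hg
  rw [← smul_eq_iff_mem_normalizer]
  have hgPW : ((g • P : Sylow p G) : Subgroup G) ≤ W := by
    rw [← Subgroup.mem_normalizer_iff_map_conj_eq.mp hg]
    exact Subgroup.map_mono hPW
  have := unique_of_normal (P.subtype hPW) inferInstance
  exact subtype_injective (Subsingleton.elim ((g • P).subtype hgPW) (P.subtype hPW))

end Sylow

section ThreeSubgroups

variable {G : Type*} [Group G] [Finite G] {p : ℕ} [Fact p.Prime] {n : ℕ} {A B : Subgroup G}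

theorem exists_normal_sylow_le_znIntNilp (hAB : Nat.Coprime A.index B.index)
    (hz : A ⊓ B ≤ znIntNilp A n ⊓ znIntNilp B n) (hA : ¬ p ∣ A.index) (hB : ¬ p ∣ B.index) :
    ∃ P : Sylow p G, P.Normal ∧ (P : Subgroup G) ≤ znIntNilp A n := by
  have hAB' : ¬ p ∣ (A ⊓ B).index := by
    rw [Subgroup.index_inf_eq_mul_of_coprime hAB]
    exact Nat.Prime.not_dvd_mul Fact.out hA hB
  obtain ⟨P, hP⟩ := Sylow.exists_le_of_not_dvd_index hAB'
  have hPA : (P : Subgroup G) ≤ znIntNilp A n := hP.trans (hz.trans inf_le_left)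
  have hPB : (P : Subgroup G) ≤ znIntNilp B n := hP.trans (hz.trans inf_le_right)
  have normalizer_ge : ∀ C : Subgroup G, (P : Subgroup G) ≤ znIntNilp C n →
      C ≤ Subgroup.normalizer (P : Set G) := fun C hPC =>
    have : Group.IsNilpotent (znIntNilp C n) := ⟨n, upperCentralSeries_znIntNilp C n⟩
    (le_normalizer_znIntNilp C n).trans (P.normalizer_le_normalizer_of_le_isNilpotent hPC)
  refine ⟨P, ?_, hPA⟩
  exact Subgroup.normalizer_eq_top_iff.mp <|
    Subgroup.eq_top_of_le_of_coprime_index (normalizer_ge A hPA) (normalizer_ge B hPB) hAB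

theorem sylow_normal_and_upperCentralSeries_eq_top (hAB : Nat.Coprime A.index B.index)
    (hz : A ⊓ B ≤ znIntNilp A n ⊓ znIntNilp B n) (hA : ¬ p ∣ A.index) (hB : ¬ p ∣ B.index)
    (Q : Sylow p G) : Q.Normal ∧ Subgroup.upperCentralSeries Q n = ⊤ := by
  obtain ⟨P, hP, hPA⟩ := exists_normal_sylow_le_znIntNilp hAB hz hA hB
  have : Unique (Sylow p G) := Sylow.unique_of_normal P hP
  rw [Subsingleton.elim Q P]
  exact ⟨hP, Subgroup.upperCentralSeries_eq_top_of_le hPA (upperCentralSeries_znIntNilp A n)⟩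

end ThreeSubgroups

/-- If a finite group `G` has three subgroups `A₁, A₂, A₃` with
pairwise coprime indices such that `Aᵢ ∩ Aⱼ ≤ Z_n(Int_N(Aᵢ)) ∩ Z_n(Int_N(Aⱼ))`
for all `i ≠ j`, then `G` is nilpotent of class at most `n`. -/
theorem nilpotent_class_le_of_three_subgroups
    (G : Type*) [Group G] [Finite G] (n : ℕ) (A₁ A₂ A₃ : Subgroup G)
    (h₁₂ : Nat.Coprime A₁.index A₂.index)
    (h₁₃ : Nat.Coprime A₁.index A₃.index)
    (h₂₃ : Nat.Coprime A₂.index A₃.index)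
    (hz₁₂ : A₁ ⊓ A₂ ≤ znIntNilp A₁ n ⊓ znIntNilp A₂ n)
    (hz₁₃ : A₁ ⊓ A₃ ≤ znIntNilp A₁ n ⊓ znIntNilp A₃ n)
    (hz₂₃ : A₂ ⊓ A₃ ≤ znIntNilp A₂ n ⊓ znIntNilp A₃ n) :
    Group.IsNilpotent G ∧ upperCentralSeries G n = ⊤ := by
  have not_dvd_both : ∀ {p a b : ℕ} [Fact p.Prime], Nat.Coprime a b → p ∣ a → ¬ p ∣ b :=
    fun hab ha hb => (Fact.out : Nat.Prime _).ne_one (Nat.eq_one_of_dvd_coprimes hab ha hb)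
  have htop : Subgroup.upperCentralSeries G n = ⊤ := by
    refine Subgroup.upperCentralSeries_eq_top_of_sylow fun p _ => ?_
    by_cases h₁ : p ∣ A₁.index
    · exact sylow_normal_and_upperCentralSeries_eq_top h₂₃ hz₂₃
        (not_dvd_both h₁₂ h₁) (not_dvd_both h₁₃ h₁)
    by_cases h₂ : p ∣ A₂.index
    · exact sylow_normal_and_upperCentralSeries_eq_top h₁₃ hz₁₃ h₁ (not_dvd_both h₂₃ h₂)
    · exact sylow_normal_and_upperCentralSeries_eq_top h₁₂ hz₁₂ h₁ h₂
  exact ⟨⟨n, htop⟩, htop⟩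
end

section
/- Let G be a finite group, N ⊴ G with N ≤ U ≤ G, such that U/N is a maximal nilpotent subgroup of G/N (maximal among nilpotent subgroups of G/N). Then U = U₀N for some maximal nilpotent subgroup U₀ of G. -/
/-!
Choose `V` minimal among the subgroups with `V ⊔ N = U`. Then `V ∩ N ≤ Φ(V)`: a maximal subgroup
of `V` not containing `V ∩ N` would, together with `N`, still generate `U`. As
`V / (V ∩ N) ≅ U / N` is nilpotent, the saturation of the class of finite nilpotent groups makes `V`
nilpotent. Any maximal nilpotent `U₀ ≥ V` then has nilpotent image `U₀N / N ≥ U / N`, so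
`U₀N = U` by maximality of `U / N`.
-/

open Pointwise

namespace Subgroup

variable {G H : Type*} [Group G] [Group H]

theorem isCoatom_map_of_ker_le {f : G →* H} (hf : Function.Surjective f) {M : Subgroup G}
    (hker : f.ker ≤ M) (hM : IsCoatom M) : IsCoatom (M.map f) := by
  refine ⟨fun htop => hM.1 ?_, fun B hB => ?_⟩
  · rw [← comap_map_eq_self hker, htop, comap_top]
  · rw [← comap_lt_comap_of_surjective hf, comap_map_eq_self hker] at hB
    exact comap_injective hf (by rw [hM.2 _ hB, comap_top])

instance isNilpotent_map (f : G →* H) (K : Subgroup G) [Group.IsNilpotent K] :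
    Group.IsNilpotent (K.map f) :=
  Group.nilpotent_of_surjective _ (f.subgroupMap_surjective K)

theorem subgroupOf_le_frattini_of_minimal {N U V : Subgroup G}
    (hV : Minimal (fun W => W ⊔ N = U) V) : N.subgroupOf V ≤ frattini V := by
  refine le_iInf₂ fun M hM => ?_
  by_contra hNM
  have hsup : M ⊔ N.subgroupOf V = ⊤ := hM.2 _ (left_lt_sup.mpr hNM)
  set W := M.map V.subtype
  have hWV : W ⊔ (N ⊓ V) = V := by
    simpa [map_sup, subgroupOf_map_subtype, ← MonoidHom.range_eq_map] using
      congrArg (map V.subtype) hsup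
  have hWN : W ⊔ N = U := by
    rw [← hV.1, ← hWV, sup_assoc, sup_eq_right.mpr (inf_le_left : N ⊓ V ≤ N)]
  have hVW : V ≤ W := hV.2 hWN (map_subtype_le M)
  refine hM.1 (map_injective V.subtype_injective ?_)
  rw [← MonoidHom.range_eq_map, range_subtype]
  exact le_antisymm (map_subtype_le M) hVW

end Subgroup

open Subgroup

theorem Group.isNilpotent_of_surjective_of_ker_le_frattini {G H : Type*} [Group G] [Group H]
    [Finite G] [IsNilpotent H] (f : G →* H) (hf : Function.Surjective f)
    (hker : f.ker ≤ frattini G) : IsNilpotent G := by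
  refine ((isNilpotent_of_finite_tfae (G := G)).out 0 2).mpr fun M hM => ?_
  have hkerM : f.ker ≤ M := hker.trans (frattini_le_coatom hM)
  have hMf : (M.map f).Normal := normalizerCondition_of_isNilpotent.normal_of_coatom _
    (isCoatom_map_of_ker_le hf hkerM hM)
  simpa [comap_map_eq_self hkerM] using hMf.comap f

theorem exists_isMaxNilpotentSubgroup_ge {G : Type*} [Group G] [Finite G] (V : Subgroup G)
    [Group.IsNilpotent V] : ∃ U, IsMaxNilpotentSubgroup U ∧ V ≤ U := by
  obtain ⟨U, hVU, hU⟩ :=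
    Finite.exists_le_maximal (p := fun W : Subgroup G => Group.IsNilpotent W) ‹_›
  exact ⟨U, ⟨hU.1, fun W hW hUW => le_antisymm hUW (hU.2 hW hUW)⟩, hVU⟩

/-- If `N ⊴ G`, `N ≤ U ≤ G` and `U/N` is a maximal nilpotent
subgroup of `G/N`, then `U = U₀N` for some maximal nilpotent subgroup `U₀`
of `G`. -/
theorem maximal_nilpotent_of_quotient_lifts
    (G : Type*) [Group G] [Finite G] (N : Subgroup G) [N.Normal]
    (U : Subgroup G) (hNU : N ≤ U)
    (hmax : IsMaxNilpotentSubgroup (Subgroup.map (QuotientGroup.mk' N) U)) :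
    ∃ U₀ : Subgroup G, IsMaxNilpotentSubgroup U₀ ∧
      (U₀ : Set G) * (N : Set G) = (U : Set G) := by
  have hUN : U ⊔ N = U := sup_eq_left.mpr hNU
  obtain ⟨V, -, hV⟩ := Finite.exists_le_minimal (p := fun W => W ⊔ N = U) hUN
  have hmapV : V.map (QuotientGroup.mk' N) = U.map (QuotientGroup.mk' N) := by
    rw [map_eq_map_iff, QuotientGroup.ker_mk', hV.1, hUN]
  have : Group.IsNilpotent (V.map (QuotientGroup.mk' N)) := hmapV ▸ hmax.1
  have hker : ((QuotientGroup.mk' N).subgroupMap V).ker ≤ frattini V := by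
    rw [ker_subgroupMap, QuotientGroup.ker_mk']
    exact subgroupOf_le_frattini_of_minimal hV
  have : Group.IsNilpotent V :=
    Group.isNilpotent_of_surjective_of_ker_le_frattini _ (MonoidHom.subgroupMap_surjective _ V) hker
  obtain ⟨U₀, hU₀, hVU₀⟩ := exists_isMaxNilpotentSubgroup_ge V
  have : Group.IsNilpotent U₀ := hU₀.1
  have hmapU₀ : U.map (QuotientGroup.mk' N) = U₀.map (QuotientGroup.mk' N) :=
    hmax.2 _ inferInstance (hmapV ▸ map_mono hVU₀)
  rw [map_eq_map_iff, QuotientGroup.ker_mk', hUN] at hmapU₀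
  exact ⟨U₀, hU₀, by rw [← mul_normal, hmapU₀]⟩
end
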